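/- arXiv:2004.04457 — 2 statements merged into one kernel-verified Lean document; each statement's English description precedes it below -/
import Mathlib

section
/- Let ℓ and a be natural numbers with 2 ≤ a ≤ ℓ. The function p ↦ BinoTail(ℓ,a,p) = Σ_{j=a}^{ℓ} C(ℓ,j) p^j (1−p)^{ℓ−j} is convex on the interval [0, (a−1)/(ℓ−1)]. (This makes precise the paper's claim that BinoTail(ℓ,a,·), as a function of p, has a sigmoid shape which is convex for p up to approximately a/ℓ.) -/
/-! The summands of `binoTail ℓ a` are the Bernstein polynomials `b ℓ j`, and since
`(b (n+1) (j+1))' = (n+1) (b n j - b n (j+1))`, the derivative of the tail sum telescopes: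
`(binoTail (n+1) (k+1))' = (n+1) b n k`. The Bernstein polynomial `b n k = C(n,k) p^k (1-p)^(n-k)`
increases on `[0, k/n]`, up to its mode, so `binoTail` has a monotone derivative there. -/

open Finset

/-- `binoTail ℓ a p = Σ_{j=a}^{ℓ} C(ℓ,j) p^j (1−p)^{ℓ−j}`, the probability mass
in the right tail of a Binomial(ℓ,p) distribution. -/
noncomputable def binoTail (ℓ a : ℕ) (p : ℝ) : ℝ :=
  ∑ j ∈ Finset.Icc a ℓ, (ℓ.choose j : ℝ) * p ^ j * (1 - p) ^ (ℓ - j)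

open Polynomial

theorem Polynomial.derivative_sum_Icc_bernsteinPolynomial (R : Type*) [CommRing R] (n k : ℕ) :
    derivative (∑ j ∈ Icc (k + 1) (n + 1), bernsteinPolynomial R (n + 1) j) =
      (n + 1) * bernsteinPolynomial R n k := by
  rcases le_or_gt k n with hkn | hnk
  · have telescope : ∑ i ∈ Icc k n, (bernsteinPolynomial R n i - bernsteinPolynomial R n (i + 1))
        = bernsteinPolynomial R n k := by
      rw [← neg_inj, ← sum_neg_distrib]
      simp only [neg_sub]
      rw [sum_Icc_sub hkn, bernsteinPolynomial.eq_zero_of_lt R n.lt_succ_self, zero_sub]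
    rw [← map_add_right_Icc, sum_map, derivative_sum]
    simp only [addRightEmbedding_apply, bernsteinPolynomial.derivative_succ_aux, ← mul_sum,
      telescope]
  · rw [Icc_eq_empty (by omega), sum_empty, derivative_zero,
      bernsteinPolynomial.eq_zero_of_lt R hnk, mul_zero]

theorem binoTail_eq_eval_sum_bernsteinPolynomial (ℓ a : ℕ) (p : ℝ) :
    binoTail ℓ a p = (∑ j ∈ Icc a ℓ, bernsteinPolynomial ℝ ℓ j).eval p := by
  simp [binoTail, bernsteinPolynomial, eval_finsetSum]

theorem hasDerivAt_binoTail (n k : ℕ) (p : ℝ) :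
    HasDerivAt (binoTail (n + 1) (k + 1)) ((n + 1) * (bernsteinPolynomial ℝ n k).eval p) p := by
  have h := (∑ j ∈ Icc (k + 1) (n + 1), bernsteinPolynomial ℝ (n + 1) j).hasDerivAt p
  rw [derivative_sum_Icc_bernsteinPolynomial, eval_mul] at h
  simpa [← binoTail_eq_eval_sum_bernsteinPolynomial] using h

theorem monotoneOn_pow_mul_one_sub_pow (m n : ℕ) :
    MonotoneOn (fun p : ℝ => p ^ m * (1 - p) ^ n) (Set.Icc 0 (m / (m + n))) := by
  refine monotoneOn_of_deriv_nonneg (convex_Icc _ _) (by fun_prop) (by fun_prop) ?_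
  intro x hx
  rw [interior_Icc] at hx
  obtain ⟨hx0, hxm⟩ := hx
  obtain ⟨m, rfl⟩ : ∃ m₀, m = m₀ + 1 := ⟨m - 1, by rcases m with _ | m <;> simp_all; linarith⟩
  have hmn : (0 : ℝ) < (m + 1 : ℕ) + n := by positivity
  have hx1 : x < 1 := hxm.trans_le (div_le_one_of_le₀ (by simp) hmn.le)
  rw [lt_div_iff₀ hmn] at hxm
  rcases n with _ | n
  · simp only [pow_zero, mul_one, deriv_pow_field]
    positivity
  · have hderiv : HasDerivAt (fun p : ℝ => p ^ (m + 1) * (1 - p) ^ (n + 1))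
        (x ^ m * (1 - x) ^ n * ((m + 1) * (1 - x) - (n + 1) * x)) x := by
      refine ((hasDerivAt_pow (m + 1) x).fun_mul
        (((hasDerivAt_id' x).const_sub 1).fun_pow (n + 1))).congr_deriv ?_
      simp only [Nat.add_sub_cancel]
      push_cast
      ring
    rw [hderiv.deriv]
    push_cast at hxm
    have hslope : 0 ≤ (m + 1) * (1 - x) - (n + 1) * x := by linarith
    have hx1' : 0 ≤ 1 - x := by linarith
    positivity

theorem bernsteinPolynomial.monotoneOn_eval (n k : ℕ) :
    MonotoneOn (fun p : ℝ => (bernsteinPolynomial ℝ n k).eval p) (Set.Icc 0 (k / n)) := by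
  rcases le_or_gt k n with hkn | hnk
  · have h := monotoneOn_pow_mul_one_sub_pow k (n - k)
    rw [Nat.cast_sub hkn, add_sub_cancel] at h
    intro x hx y hy hxy
    simp only [bernsteinPolynomial, eval_mul, eval_natCast, eval_pow, eval_X, eval_sub, eval_one,
      mul_assoc]
    exact mul_le_mul_of_nonneg_left (h hx hy hxy) (Nat.cast_nonneg _)
  · simpa [bernsteinPolynomial.eq_zero_of_lt ℝ hnk] using monotoneOn_const

/-- For `2 ≤ a ≤ ℓ`, the function `p ↦ BinoTail(ℓ,a,p)` is convex on the
interval `[0, (a−1)/(ℓ−1)]`. -/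
theorem binoTail_convexOn (ℓ a : ℕ) (ha : 2 ≤ a) (haℓ : a ≤ ℓ) :
    ConvexOn ℝ (Set.Icc (0 : ℝ) (((a : ℝ) - 1) / ((ℓ : ℝ) - 1))) (binoTail ℓ a) := by
  obtain ⟨n, rfl⟩ : ∃ n, ℓ = n + 1 := ⟨ℓ - 1, by omega⟩
  obtain ⟨k, rfl⟩ : ∃ k, a = k + 1 := ⟨a - 1, by omega⟩
  have hdiff : Differentiable ℝ (binoTail (n + 1) (k + 1)) :=
    fun p => (hasDerivAt_binoTail n k p).differentiableAt
  have hderiv : deriv (binoTail (n + 1) (k + 1)) =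
      fun p => (n + 1) * (bernsteinPolynomial ℝ n k).eval p :=
    funext fun p => (hasDerivAt_binoTail n k p).deriv
  push_cast
  simp only [add_sub_cancel_right]
  refine MonotoneOn.convexOn_of_deriv (convex_Icc _ _) hdiff.continuous.continuousOn
    hdiff.differentiableOn ?_
  rw [hderiv]
  intro x hx y hy hxy
  exact mul_le_mul_of_nonneg_left
    (bernsteinPolynomial.monotoneOn_eval n k (interior_subset hx) (interior_subset hy) hxy)
    (by positivity)
end

section
/- Let ℓ and a be natural numbers with 1 ≤ a ≤ ℓ and ℓ ≥ 2. The function p ↦ BinoTail(ℓ,a,p) = Σ_{j=a}^{ℓ} C(ℓ,j) p^j (1−p)^{ℓ−j} is concave on the interval [(a−1)/(ℓ−1), 1]. (This is the concave part of the sigmoid shape of the binomial tail asserted in the proof of the paper's Lemma 3.) -/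
/-!
Each term of `binoTail ℓ a` is a Bernstein basis polynomial, and the derivatives of Bernstein
polynomials telescope, so `binoTail ℓ a` has derivative `ℓ C(ℓ-1, a-1) p^(a-1) (1-p)^(ℓ-a)`.
That function is unimodal with its mode at `(a-1)/(ℓ-1)`, so the derivative is antitone to the
right of the mode and the tail is concave there.
-/

open Finset

open Polynomial

theorem natCast_mul_pow_sub_one_mul {R : Type*} [Semiring R] (n : ℕ) (x : R) :
    (n : R) * x ^ (n - 1) * x = n * x ^ n := by
  cases n <;> simp [pow_succ, mul_assoc]

theorem antitoneOn_pow_mul_one_sub_pow (m n : ℕ) :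
    AntitoneOn (fun x : ℝ => x ^ m * (1 - x) ^ n) (Set.Icc (m / (m + n)) 1) := by
  refine antitoneOn_of_deriv_nonpos (convex_Icc _ _) (by fun_prop) (by fun_prop) fun x hx => ?_
  rw [interior_Icc] at hx
  have hx0 : 0 < x := (by positivity : (0 : ℝ) ≤ m / (m + n)).trans_lt hx.1
  have hx1 : 0 < 1 - x := sub_pos.2 hx.2
  have hderiv : HasDerivAt (fun x : ℝ => x ^ m * (1 - x) ^ n)
      (m * x ^ (m - 1) * (1 - x) ^ n - n * (1 - x) ^ (n - 1) * x ^ m) x :=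
    ((hasDerivAt_pow m x).fun_mul (((hasDerivAt_id' x).const_sub 1).fun_pow n)).congr_deriv
      (by ring)
  rw [hderiv.deriv]
  refine nonpos_of_mul_nonpos_left ?_ (mul_pos hx0 hx1)
  have hfactor : (m * x ^ (m - 1) * (1 - x) ^ n - n * (1 - x) ^ (n - 1) * x ^ m) * (x * (1 - x))
      = x ^ m * (1 - x) ^ n * ((m + n) * (m / (m + n) - x)) := by
    rw [mul_sub (_ + _), mul_div_cancel_of_imp' fun h => by
      exact_mod_cast (Nat.add_eq_zero_iff.1 (by exact_mod_cast h)).1]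
    linear_combination (1 - x) ^ (n + 1) * natCast_mul_pow_sub_one_mul m x
      - x ^ (m + 1) * natCast_mul_pow_sub_one_mul n (1 - x)
  rw [hfactor]
  exact mul_nonpos_of_nonneg_of_nonpos (by positivity)
    (mul_nonpos_of_nonneg_of_nonpos (by positivity) (sub_nonpos.2 hx.1.le))

theorem derivative_sum_bernsteinPolynomial_Icc {R : Type*} [CommRing R] {k n : ℕ} (hk : k ≤ n) :
    derivative (∑ j ∈ Icc (k + 1) (n + 1), bernsteinPolynomial R (n + 1) j)
      = (n + 1) * bernsteinPolynomial R n k := by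
  rw [← map_add_right_Icc k n 1, sum_map, derivative_sum]
  simp only [addRightEmbedding_apply, bernsteinPolynomial.derivative_succ_aux, ← mul_sum]
  congr 1
  have htelescope := sum_Icc_sub hk fun i => -bernsteinPolynomial R n i
  simpa only [sub_neg_eq_add, neg_add_eq_sub, neg_zero, zero_add,
    bernsteinPolynomial.eq_zero_of_lt R (Nat.lt_succ_self n)] using htelescope

theorem binoTail_eq_eval (ℓ a : ℕ) :
    binoTail ℓ a = fun p => (∑ j ∈ Icc a ℓ, bernsteinPolynomial ℝ ℓ j).eval p := by
  ext p
  simp [binoTail, bernsteinPolynomial, eval_finsetSum]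

theorem binoTail_concaveOn_general (ℓ a : ℕ) (ha : 1 ≤ a) (haℓ : a ≤ ℓ) :
    ConcaveOn ℝ (Set.Icc (((a : ℝ) - 1) / ((ℓ : ℝ) - 1)) 1) (binoTail ℓ a) := by
  obtain ⟨k, rfl⟩ : ∃ k, a = k + 1 := ⟨a - 1, by omega⟩
  obtain ⟨m, rfl⟩ : ∃ m, ℓ = k + m + 1 := ⟨ℓ - (k + 1), by omega⟩
  have hderiv : deriv (binoTail (k + m + 1) (k + 1))
      = fun x : ℝ => ((k + m + 1 : ℝ) * (k + m).choose k) * (x ^ k * (1 - x) ^ m) := by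
    ext x
    rw [binoTail_eq_eval, Polynomial.deriv, derivative_sum_bernsteinPolynomial_Icc (by omega)]
    simp only [Nat.cast_add, bernsteinPolynomial, add_tsub_cancel_left, eval_mul, eval_add,
      eval_natCast, eval_one, eval_pow, eval_X, eval_sub]
    ring
  have hmode : (((k + 1 : ℕ) : ℝ) - 1) / (((k + m + 1 : ℕ) : ℝ) - 1) = k / (k + m) := by
    push_cast
    ring
  rw [hmode]
  refine AntitoneOn.concaveOn_of_deriv (convex_Icc _ _) ?_ ?_ ?_
  · rw [binoTail_eq_eval]
    exact Polynomial.continuousOn _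
  · rw [binoTail_eq_eval]
    exact Polynomial.differentiableOn _
  · rw [hderiv]
    exact fun x hx y hy hxy => mul_le_mul_of_nonneg_left
      (antitoneOn_pow_mul_one_sub_pow k m (interior_subset hx) (interior_subset hy) hxy)
      (by positivity)

/-- For `1 ≤ a ≤ ℓ` with `ℓ ≥ 2`, the function `p ↦ BinoTail(ℓ,a,p)` is
concave on the interval `[(a−1)/(ℓ−1), 1]`. -/
theorem binoTail_concaveOn (ℓ a : ℕ) (ha : 1 ≤ a) (haℓ : a ≤ ℓ) (hℓ : 2 ≤ ℓ) :
    ConcaveOn ℝ (Set.Icc (((a : ℝ) - 1) / ((ℓ : ℝ) - 1)) 1) (binoTail ℓ a) :=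
  binoTail_concaveOn_general ℓ a ha haℓ
end
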